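/- Let X be a compact metric space with finite Borel measure μ, f : X → [0,∞) continuous with ∫_X f dμ > 0, and ν_k a sequence of finite Borel measures on X. Suppose there exist constants E_1, E_2 > 0, a sequence r_k → 0, and for each k a cover {B(x_i^k, r_k)}_{i=1}^{N_k} of X with pointwise overlap at most L, such that E_1 μ(B(x_i^k, r_k)) ≤ ν_k(B(x_i^k, r_k)) ≤ E_2 μ(B(x_i^k, r_k)) for all i. Then for all sufficiently large k: (E_1 / (2L)) ∫_X f dμ ≤ ∫_X f dν_k ≤ 2 L E_2 ∫_X f dμ. -/

import Mathlib

open Metric MeasureTheory Filter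
open scoped Topology

lemma sandwich {X : Type*} [MeasurableSpace X] (lam : Measure X) [IsFiniteMeasure lam]
    {n : ℕ} (s : Fin n → Set X) (hs : ∀ i, MeasurableSet (s i))
    (g : X → ℝ) (hg : Integrable g lam) (hg0 : ∀ x, 0 ≤ g x) (L : ℕ)
    (hcov : ∀ x, ∃ i, x ∈ s i)
    (hov : ∀ x, {i : Fin n | x ∈ s i}.ncard ≤ L) :
    (∫ x, g x ∂lam ≤ ∑ i, ∫ x in s i, g x ∂lam) ∧
    (∑ i, ∫ x in s i, g x ∂lam ≤ (L : ℝ) * ∫ x, g x ∂lam) := by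
  classical
  have hind : ∀ i, Integrable ((s i).indicator g) lam := fun i => hg.indicator (hs i)
  have hsum : (∑ i, ∫ x in s i, g x ∂lam) = ∫ x, ∑ i, (s i).indicator g x ∂lam := by
    rw [integral_finset_sum _ (fun i _ => hind i)]
    exact Finset.sum_congr rfl fun i _ => (integral_indicator (hs i)).symm
  have hcard : ∀ x, ({i : Fin n | x ∈ s i}.ncard : ℝ) =
      ((Finset.univ.filter (fun i => x ∈ s i)).card : ℝ) := by
    intro x
    congr 1
    rw [Set.ncard_eq_toFinset_card']
    congr 1
    ext i
    simp
  have hpt : ∀ x, (∑ i, (s i).indicator g x) =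
      ({i : Fin n | x ∈ s i}.ncard : ℝ) * g x := by
    intro x
    rw [hcard]
    rw [show (∑ i, (s i).indicator g x) = ∑ i ∈ Finset.univ.filter (fun i => x ∈ s i), g x by
      rw [Finset.sum_filter]; exact Finset.sum_congr rfl fun i _ => Set.indicator_apply _ _ _]
    rw [Finset.sum_const, nsmul_eq_mul]
  constructor
  · rw [hsum]
    refine integral_mono hg (integrable_finset_sum _ fun i _ => hind i) fun x => ?_
    rw [hpt]
    have h1 : 1 ≤ ({i : Fin n | x ∈ s i}.ncard : ℝ) := by
      have := Set.Nonempty.ncard_pos (s := {i : Fin n | x ∈ s i}) ?_ ?_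
      · exact_mod_cast this
      · exact Set.toFinite _
      · exact hcov x
    nlinarith [hg0 x]
  · rw [hsum, show (L : ℝ) * ∫ x, g x ∂lam = ∫ x, (L : ℝ) * g x ∂lam by
      rw [integral_const_mul]]
    refine integral_mono (integrable_finset_sum _ fun i _ => hind i) (hg.const_mul _) fun x => ?_
    rw [hpt]
    have : ({i : Fin n | x ∈ s i}.ncard : ℝ) ≤ L := by exact_mod_cast hov x
    nlinarith [hg0 x]

set_option maxHeartbeats 1000000 in
/-- two-sided small-scale comparability of the measures `ν k` with `μ`
on covers of shrinking radius, with bounded overlap, gives two-sided comparability of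
integrals of a fixed nonnegative continuous function with positive integral, for
large `k`. -/
theorem stmt_8 {X : Type*} [MetricSpace X] [CompactSpace X]
    [MeasurableSpace X] [BorelSpace X]
    (μ : Measure X) [IsFiniteMeasure μ]
    (f : X → ℝ) (hf : Continuous f) (hf0 : ∀ x, 0 ≤ f x)
    (hfpos : 0 < ∫ x, f x ∂μ)
    (ν : ℕ → Measure X) (hν : ∀ k, IsFiniteMeasure (ν k))
    (E₁ E₂ : ℝ) (hE₁ : 0 < E₁) (hE₂ : 0 < E₂)
    (r : ℕ → ℝ) (hrpos : ∀ k, 0 < r k) (hr : Tendsto r atTop (𝓝 0))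
    (L : ℕ) (hL : 1 ≤ L)
    (N : ℕ → ℕ) (c : ∀ k, Fin (N k) → X)
    (hcover : ∀ k, (⋃ i, ball (c k i) (r k)) = Set.univ)
    (hoverlap : ∀ k, ∀ x : X, {i : Fin (N k) | x ∈ ball (c k i) (r k)}.ncard ≤ L)
    (hcomp : ∀ k, ∀ i : Fin (N k),
      E₁ * (μ (ball (c k i) (r k))).toReal ≤ (ν k (ball (c k i) (r k))).toReal ∧
      (ν k (ball (c k i) (r k))).toReal ≤ E₂ * (μ (ball (c k i) (r k))).toReal) :
    ∀ᶠ k in atTop,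
      (E₁ / (2 * L)) * ∫ x, f x ∂μ ≤ ∫ x, f x ∂(ν k) ∧
      ∫ x, f x ∂(ν k) ≤ 2 * L * E₂ * ∫ x, f x ∂μ := by
  classical
  have hIμ : Integrable f μ := by
    have := hf.continuousOn.integrableOn_compact (μ := μ) isCompact_univ
    rwa [integrableOn_univ] at this
  set I := ∫ x, f x ∂μ with hI
  set M := (μ Set.univ).toReal with hM
  have hM0 : 0 ≤ M := ENNReal.toReal_nonneg
  have hL1 : (1:ℝ) ≤ (L:ℝ) := by exact_mod_cast hL
  have hLpos : (0:ℝ) < L := by linarith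
  set ε := I / (4 * L * (M + 1)) with hε
  have hden : (0:ℝ) < 4 * L * (M + 1) := by positivity
  have hεpos : 0 < ε := div_pos hfpos hden
  have hεI : ε * (4 * L * (M + 1)) = I := div_mul_cancel₀ _ (ne_of_gt hden)
  have hεM : 2 * ε * M ≤ I := by nlinarith
  have hεLM : 2 * ε * L * M ≤ I / 2 := by nlinarith
  obtain ⟨δ, hδ, hδε⟩ := Metric.uniformContinuous_iff.mp
    (CompactSpace.uniformContinuous_of_continuous hf) ε hεpos
  filter_upwards [hr.eventually (gt_mem_nhds hδ)] with k hk
  haveI := hν k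
  have hIν : Integrable f (ν k) := by
    have := hf.continuousOn.integrableOn_compact (μ := ν k) isCompact_univ
    rwa [integrableOn_univ] at this
  set B : Fin (N k) → Set X := fun i => Metric.ball (c k i) (r k) with hBdef
  have hBmeas : ∀ i, MeasurableSet (B i) := fun i => measurableSet_ball
  have hclose : ∀ i, ∀ x ∈ B i, |f x - f (c k i)| < ε := by
    intro i x hx
    have h1 : dist x (c k i) < δ := lt_trans (mem_ball.mp hx) hk
    have := hδε h1
    rwa [Real.dist_eq] at this
  have hcov : ∀ x, ∃ i, x ∈ B i := by
    intro x
    have hx : x ∈ ⋃ i, Metric.ball (c k i) (r k) := (hcover k) ▸ Set.mem_univ x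
    exact Set.mem_iUnion.mp hx
  have hov := hoverlap k
  have sand_ν := sandwich (ν k) B hBmeas f hIν hf0 L hcov hov
  have sand_μf := sandwich μ B hBmeas f hIμ hf0 L hcov hov
  have sand_μg := sandwich μ B hBmeas (fun x => f x + 2*ε)
    (hIμ.add (integrable_const _)) (fun x => by nlinarith [hf0 x]) L hcov hov
  have sand_one := sandwich μ B hBmeas (fun _ => (1:ℝ)) (integrable_const 1)
    (fun _ => zero_le_one) L hcov hov
  have hSmu : ∑ i, (μ (B i)).toReal ≤ (L:ℝ) * M := by
    have h2 := sand_one.2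
    simpa [setIntegral_const, integral_const, smul_eq_mul, hM, measureReal_def] using h2
  -- upper bound
  have hub : ∫ x, f x ∂(ν k) ≤ 2 * L * E₂ * I := by
    have step1 : ∀ i, ∫ x in B i, f x ∂(ν k) ≤ E₂ * ∫ x in B i, (f x + 2*ε) ∂μ := by
      intro i
      have hcball : ∀ x ∈ B i, f x ≤ f (c k i) + ε := fun x hx => by
        have := hclose i x hx; cases abs_lt.mp this; linarith
      have h1 : ∫ x in B i, f x ∂(ν k) ≤ (f (c k i) + ε) * ((ν k) (B i)).toReal := by
        have := setIntegral_mono_on hIν.integrableOn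
          ((integrable_const (f (c k i) + ε)).integrableOn) (hBmeas i) hcball
        rwa [setIntegral_const, smul_eq_mul, mul_comm] at this
      have h2 : (f (c k i) + ε) * ((ν k) (B i)).toReal ≤
          E₂ * ((f (c k i) + ε) * (μ (B i)).toReal) := by
        have hnn : 0 ≤ f (c k i) + ε := by nlinarith [hf0 (c k i)]
        have := (hcomp k i).2
        calc (f (c k i) + ε) * ((ν k) (B i)).toReal
            ≤ (f (c k i) + ε) * (E₂ * (μ (B i)).toReal) :=
              mul_le_mul_of_nonneg_left this hnn
          _ = E₂ * ((f (c k i) + ε) * (μ (B i)).toReal) := by ring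
      have h3 : (f (c k i) + ε) * (μ (B i)).toReal ≤ ∫ x in B i, (f x + 2*ε) ∂μ := by
        have hpt : ∀ x ∈ B i, f (c k i) + ε ≤ f x + 2*ε := fun x hx => by
          have := hclose i x hx; cases abs_lt.mp this; linarith
        have := setIntegral_mono_on
          ((integrable_const (f (c k i) + ε)).integrableOn)
          ((hIμ.add (integrable_const (2*ε))).integrableOn) (hBmeas i) hpt
        rwa [setIntegral_const, smul_eq_mul, mul_comm] at this
      calc ∫ x in B i, f x ∂(ν k) ≤ (f (c k i) + ε) * ((ν k) (B i)).toReal := h1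
        _ ≤ E₂ * ((f (c k i) + ε) * (μ (B i)).toReal) := h2
        _ ≤ E₂ * ∫ x in B i, (f x + 2*ε) ∂μ := mul_le_mul_of_nonneg_left h3 hE₂.le
    have hint2 : ∫ x, (f x + 2*ε) ∂μ = I + 2*ε*M := by
      rw [integral_add hIμ (integrable_const _), integral_const, smul_eq_mul, measureReal_def, ← hI, ← hM]
      ring_nf
    calc ∫ x, f x ∂(ν k) ≤ ∑ i, ∫ x in B i, f x ∂(ν k) := sand_ν.1
      _ ≤ ∑ i, E₂ * ∫ x in B i, (f x + 2*ε) ∂μ := Finset.sum_le_sum fun i _ => step1 i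
      _ = E₂ * ∑ i, ∫ x in B i, (f x + 2*ε) ∂μ := by rw [Finset.mul_sum]
      _ ≤ E₂ * ((L:ℝ) * ∫ x, (f x + 2*ε) ∂μ) := mul_le_mul_of_nonneg_left sand_μg.2 hE₂.le
      _ = E₂ * ((L:ℝ) * (I + 2*ε*M)) := by rw [hint2]
      _ ≤ 2 * L * E₂ * I := by
          have h4 : (E₂*(L:ℝ))*(2*ε*M) ≤ (E₂*(L:ℝ))*I :=
            mul_le_mul_of_nonneg_left hεM (by positivity)
          linarith
  -- lower bound
  have hlb : (E₁ / (2*L)) * I ≤ ∫ x, f x ∂(ν k) := by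
    have step1 : ∀ i, E₁ * (∫ x in B i, f x ∂μ - 2*ε*(μ (B i)).toReal) ≤
        ∫ x in B i, f x ∂(ν k) := by
      intro i
      set g := max (f (c k i) - ε) 0 with hg
      have hg0 : 0 ≤ g := le_max_right _ _
      have hA : ∫ x in B i, f x ∂μ - 2*ε*(μ (B i)).toReal ≤ g * (μ (B i)).toReal := by
        have hpt : ∀ x ∈ B i, f x ≤ g + 2*ε := fun x hx => by
          have := hclose i x hx
          have h1 := abs_lt.mp this
          have h2 : f (c k i) - ε ≤ g := le_max_left _ _
          cases h1; linarith
        have := setIntegral_mono_on hIμ.integrableOn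
          ((integrable_const (g + 2*ε)).integrableOn) (hBmeas i) hpt
        rw [setIntegral_const, smul_eq_mul, measureReal_def] at this
        linarith [this]
      have hB2 : E₁ * (g * (μ (B i)).toReal) ≤ g * ((ν k) (B i)).toReal := by
        have := (hcomp k i).1
        calc E₁ * (g * (μ (B i)).toReal) = g * (E₁ * (μ (B i)).toReal) := by ring
          _ ≤ g * ((ν k) (B i)).toReal := mul_le_mul_of_nonneg_left this hg0
      have hC : g * ((ν k) (B i)).toReal ≤ ∫ x in B i, f x ∂(ν k) := by
        have hpt : ∀ x ∈ B i, g ≤ f x := fun x hx => by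
          have := hclose i x hx
          have h1 := abs_lt.mp this
          refine max_le ?_ (hf0 x)
          cases h1; linarith
        have := setIntegral_mono_on ((integrable_const g).integrableOn)
          hIν.integrableOn (hBmeas i) hpt
        rwa [setIntegral_const, smul_eq_mul, mul_comm] at this
      calc E₁ * (∫ x in B i, f x ∂μ - 2*ε*(μ (B i)).toReal)
          ≤ E₁ * (g * (μ (B i)).toReal) := mul_le_mul_of_nonneg_left hA hE₁.le
        _ ≤ g * ((ν k) (B i)).toReal := hB2
        _ ≤ ∫ x in B i, f x ∂(ν k) := hC
    have hsum : E₁ * (I - 2*ε*L*M) ≤ ∑ i, ∫ x in B i, f x ∂(ν k) := by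
      have h1 : I - 2*ε*L*M ≤ ∑ i, (∫ x in B i, f x ∂μ - 2*ε*(μ (B i)).toReal) := by
        rw [Finset.sum_sub_distrib, ← Finset.mul_sum]
        have h2 : ε * (∑ i, (μ (B i)).toReal) ≤ ε * ((L:ℝ)*M) :=
          mul_le_mul_of_nonneg_left hSmu hεpos.le
        linarith [sand_μf.1, h2]
      calc E₁ * (I - 2*ε*L*M)
          ≤ E₁ * ∑ i, (∫ x in B i, f x ∂μ - 2*ε*(μ (B i)).toReal) :=
            mul_le_mul_of_nonneg_left h1 hE₁.le
        _ = ∑ i, E₁ * (∫ x in B i, f x ∂μ - 2*ε*(μ (B i)).toReal) := Finset.mul_sum _ _ _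
        _ ≤ ∑ i, ∫ x in B i, f x ∂(ν k) := Finset.sum_le_sum fun i _ => step1 i
    have hfin : E₁ * (I/2) ≤ (L:ℝ) * ∫ x, f x ∂(ν k) := by
      have h3 : E₁ * (I/2) ≤ E₁ * (I - 2*ε*L*M) :=
        mul_le_mul_of_nonneg_left (by linarith) hE₁.le
      linarith [sand_ν.2, hsum, h3]
    rw [show E₁ / (2*(L:ℝ)) * I = (E₁ * (I/2)) / L by field_simp]
    rw [div_le_iff₀ hLpos]
    linarith [hfin]
  exact ⟨hlb, hub⟩
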